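/- Let n ≥ 1 and let x, y : {1,…,n} → {0,1} be such that neither x nor y is identically zero. In the graph SAL(x,y): if there exists an index i with x_i = y_i = 1, then every two vertices are at distance at most 3; if there is no such index, then dist(a, b) = 4. -/

import Mathlib

/-- Vertices of the `Simple AL` construction: `a`, `b`, `c`, and `l i`, `r i`
for `i ∈ {1, …, n}` (encoded as `Fin n`). -/
inductive SALVert (n : ℕ) : Type
  | a : SALVert n
  | b : SALVert n
  | c : SALVert n
  | l : Fin n → SALVert n
  | r : Fin n → SALVert n

/-- Edges of `SAL(x, y)`: `l i ~ r i`; `c ~ l i` and `c ~ r i`;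
`a ~ l i` iff `x i = 1`; `b ~ r i` iff `y i = 1`; no other edges. -/
def salRel {n : ℕ} (x y : Fin n → Fin 2) : SALVert n → SALVert n → Prop
  | .l i, .r j => i = j
  | .c, .l _ => True
  | .c, .r _ => True
  | .a, .l i => x i = 1
  | .b, .r i => y i = 1
  | _, _ => False

/-- The `Simple AL` graph. -/
def SAL {n : ℕ} (x y : Fin n → Fin 2) : SimpleGraph (SALVert n) :=
  SimpleGraph.fromRel (salRel x y)

section SALaux
variable {n : ℕ} {x y : Fin n → Fin 2} {i : Fin n}

lemma adj_cl : (SAL x y).Adj .c (.l i) := by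
  rw [SAL, SimpleGraph.fromRel_adj]; exact ⟨by simp, Or.inl (by simp [salRel])⟩

lemma adj_cr : (SAL x y).Adj .c (.r i) := by
  rw [SAL, SimpleGraph.fromRel_adj]; exact ⟨by simp, Or.inl (by simp [salRel])⟩

lemma adj_lr : (SAL x y).Adj (.l i) (.r i) := by
  rw [SAL, SimpleGraph.fromRel_adj]; exact ⟨by simp, Or.inl (by simp [salRel])⟩

lemma adj_al (h : x i = 1) : (SAL x y).Adj .a (.l i) := by
  rw [SAL, SimpleGraph.fromRel_adj]; exact ⟨by simp, Or.inl (by simpa [salRel])⟩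

lemma adj_br (h : y i = 1) : (SAL x y).Adj .b (.r i) := by
  rw [SAL, SimpleGraph.fromRel_adj]; exact ⟨by simp, Or.inl (by simpa [salRel])⟩

lemma adj_a {v : SALVert n} (h : (SAL x y).Adj .a v) : ∃ i, v = .l i ∧ x i = 1 := by
  rw [SAL, SimpleGraph.fromRel_adj] at h
  cases v <;> simp [salRel] at h
  exact ⟨_, rfl, h⟩

lemma adj_b' {v : SALVert n} (h : (SAL x y).Adj v .b) : ∃ i, v = .r i ∧ y i = 1 := by
  rw [SAL, SimpleGraph.fromRel_adj] at h
  cases v <;> simp [salRel] at h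
  exact ⟨_, rfl, h⟩

lemma adj_l {v : SALVert n} (h : (SAL x y).Adj (.l i) v) :
    (v = .a ∧ x i = 1) ∨ v = .c ∨ v = .r i := by
  rw [SAL, SimpleGraph.fromRel_adj] at h
  cases v <;> simp [salRel] at h
  · exact Or.inl ⟨rfl, h⟩
  · exact Or.inr (Or.inl rfl)
  · exact Or.inr (Or.inr (by rw [h]))

/-- Short walk from c to any vertex. -/
lemma walk_c (hx : ∃ i, x i = 1) (hy : ∃ i, y i = 1) (w : SALVert n) :
    ∃ p : (SAL x y).Walk .c w, p.length ≤ 2 := by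
  cases w with
  | a => obtain ⟨i, hi⟩ := hx
         exact ⟨.cons adj_cl (.cons (adj_al hi).symm .nil), by simp⟩
  | b => obtain ⟨i, hi⟩ := hy
         exact ⟨.cons adj_cr (.cons (adj_br hi).symm .nil), by simp⟩
  | c => exact ⟨.nil, by simp⟩
  | l i => exact ⟨.cons adj_cl .nil, by simp⟩
  | r i => exact ⟨.cons adj_cr .nil, by simp⟩

end SALaux

theorem stmt_6 {n : ℕ} (hn : 1 ≤ n) (x y : Fin n → Fin 2)
    (hx : ∃ i, x i = 1) (hy : ∃ i, y i = 1) :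
    ((∃ i, x i = 1 ∧ y i = 1) → ∀ u w : SALVert n, (SAL x y).dist u w ≤ 3) ∧
    ((¬ ∃ i, x i = 1 ∧ y i = 1) → (SAL x y).dist SALVert.a SALVert.b = 4) := by
  constructor
  · rintro ⟨i, hxi, hyi⟩ u w
    have habc : ∀ w : SALVert n, ∃ p : (SAL x y).Walk .a w, p.length ≤ 3 := by
      intro w
      cases w with
      | a => exact ⟨.nil, by simp⟩
      | b => exact ⟨.cons (adj_al hxi) (.cons adj_lr (.cons (adj_br hyi).symm .nil)), by simp⟩
      | c => exact ⟨.cons (adj_al hxi) (.cons adj_cl.symm .nil), by simp⟩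
      | l j => exact ⟨.cons (adj_al hxi) (.cons adj_cl.symm (.cons adj_cl .nil)), by simp⟩
      | r j => exact ⟨.cons (adj_al hxi) (.cons adj_cl.symm (.cons adj_cr .nil)), by simp⟩
    have hbbc : ∀ w : SALVert n, ∃ p : (SAL x y).Walk .b w, p.length ≤ 3 := by
      intro w
      cases w with
      | a => exact ⟨.cons (adj_br hyi) (.cons adj_lr.symm (.cons (adj_al hxi).symm .nil)), by simp⟩
      | b => exact ⟨.nil, by simp⟩
      | c => exact ⟨.cons (adj_br hyi) (.cons adj_cr.symm .nil), by simp⟩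
      | l j => exact ⟨.cons (adj_br hyi) (.cons adj_cr.symm (.cons adj_cl .nil)), by simp⟩
      | r j => exact ⟨.cons (adj_br hyi) (.cons adj_cr.symm (.cons adj_cr .nil)), by simp⟩
    cases u with
    | a => obtain ⟨p, hp⟩ := habc w; exact le_trans (SimpleGraph.dist_le p) hp
    | b => obtain ⟨p, hp⟩ := hbbc w; exact le_trans (SimpleGraph.dist_le p) hp
    | c => obtain ⟨q, hq⟩ := walk_c hx hy (x := x) (y := y) w
           exact le_trans (SimpleGraph.dist_le q) (by omega)
    | l j => obtain ⟨q, hq⟩ := walk_c hx hy (x := x) (y := y) w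
             exact le_trans (SimpleGraph.dist_le (.cons adj_cl.symm q)) (by simp only [SimpleGraph.Walk.length_cons]; omega)
    | r j => obtain ⟨q, hq⟩ := walk_c hx hy (x := x) (y := y) w
             exact le_trans (SimpleGraph.dist_le (.cons adj_cr.symm q)) (by simp only [SimpleGraph.Walk.length_cons]; omega)
  · intro hno
    obtain ⟨i, hxi⟩ := hx
    obtain ⟨j, hyj⟩ := hy
    have upper : (SAL x y).dist SALVert.a SALVert.b ≤ 4 := by
      refine SimpleGraph.dist_le
        (.cons (adj_al hxi) (.cons adj_cl.symm (.cons adj_cr (.cons (adj_br hyj).symm .nil))))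
    have hreach : (SAL x y).Reachable SALVert.a SALVert.b :=
      ⟨.cons (adj_al hxi) (.cons adj_cl.symm (.cons adj_cr (.cons (adj_br hyj).symm .nil)))⟩
    refine le_antisymm upper ?_
    by_contra hlt
    push_neg at hlt
    obtain ⟨p, hp⟩ := hreach.exists_walk_length_eq_dist
    have hlen : p.length ≤ 3 := by omega
    clear hp upper hlt
    cases p with
    | cons h1 q =>
      obtain ⟨i1, rfl, hx1⟩ := adj_a h1
      cases q with
      | cons h2 q2 =>
        rcases adj_l h2 with ⟨rfl, -⟩ | rfl | rfl
        · -- back at a, q2 : Walk a b with length ≤ 1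
          cases q2 with
          | cons h3 q3 =>
            obtain ⟨i3, rfl, -⟩ := adj_a h3
            cases q3 with
            | cons h4 q4 => simp [SimpleGraph.Walk.length_cons] at hlen; omega
        · -- at c, q2 : Walk c b, length ≤ 1
          cases q2 with
          | cons h3 q3 =>
            cases q3 with
            | nil =>
              obtain ⟨i3, h3', -⟩ := adj_b' h3
              exact absurd h3' (by simp)
            | cons h4 q4 => simp [SimpleGraph.Walk.length_cons] at hlen; omega
        · -- at r i1, q2 : Walk (r i1) b, length ≤ 1
          cases q2 with
          | cons h3 q3 =>
            cases q3 with
            | nil =>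
              obtain ⟨i3, h3', hy3⟩ := adj_b' h3
              cases h3'
              exact hno ⟨i1, hx1, hy3⟩
            | cons h4 q4 => simp [SimpleGraph.Walk.length_cons] at hlen; omega
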